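/- arXiv:0911.0638 — 2 statements merged into one kernel-verified Lean document; each statement's English description precedes it below -/
import Mathlib

section
/- Let A be a commutative ring and V, W finitely generated projective A-modules. Then the second cross-effect of the Schur functor L^3_1 (defined by the short exact sequence 0 → L^3_1(V) → V ⊗ Sym^2(V) → Sym^3(V) → 0) satisfies cr_2(L^3_1)(V,W) ≅ (V ⊗ V ⊗ W) ⊕ (V ⊗ W ⊗ W). -/
open TensorProduct

open TensorProduct

section SymLib
variable (R : Type*) [CommRing R]

/-- Relations defining the second symmetric power. -/
def sq2 (M : Type*) [AddCommGroup M] [Module R M] : Submodule R (M ⊗[R] M) :=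
  Submodule.span R {x | ∃ a b : M, x = a ⊗ₜ[R] b - b ⊗ₜ[R] a}

/-- The second symmetric power. -/
abbrev SymSq (M : Type*) [AddCommGroup M] [Module R M] := (M ⊗[R] M) ⧸ sq2 R M

/-- Relations defining the third symmetric power. -/
def sq3 (M : Type*) [AddCommGroup M] [Module R M] : Submodule R (M ⊗[R] (M ⊗[R] M)) :=
  Submodule.span R
    ({x | ∃ a b c : M, x = a ⊗ₜ[R] (b ⊗ₜ[R] c) - b ⊗ₜ[R] (a ⊗ₜ[R] c)} ∪
     {x | ∃ a b c : M, x = a ⊗ₜ[R] (b ⊗ₜ[R] c) - a ⊗ₜ[R] (c ⊗ₜ[R] b)})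

/-- The third symmetric power. -/
abbrev SymCube (M : Type*) [AddCommGroup M] [Module R M] := (M ⊗[R] (M ⊗[R] M)) ⧸ sq3 R M

variable {M N : Type*} [AddCommGroup M] [Module R M] [AddCommGroup N] [Module R N]

/-- Multiplication by `v` as a map `Sym² M → Sym³ M`. -/
noncomputable def symMulAux (v : M) : SymSq R M →ₗ[R] SymCube R M :=
  Submodule.liftQ _ ((sq3 R M).mkQ ∘ₗ TensorProduct.mk R M (M ⊗[R] M) v) (by
    rw [sq2, Submodule.span_le]
    rintro x ⟨a, b, rfl⟩
    simp only [SetLike.mem_coe, LinearMap.mem_ker, LinearMap.comp_apply,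
      TensorProduct.mk_apply, map_sub, tmul_sub]
    rw [← map_sub, Submodule.mkQ_apply, Submodule.Quotient.mk_eq_zero]
    exact Submodule.subset_span (Or.inr ⟨v, a, b, rfl⟩))

lemma symMulAux_mk (v : M) (x : M ⊗[R] M) :
    symMulAux R v (Submodule.Quotient.mk x) = Submodule.Quotient.mk (v ⊗ₜ[R] x) := rfl

/-- The multiplication `M ⊗ Sym² M → Sym³ M` as a bilinear map. -/
noncomputable def symMulBil : M →ₗ[R] SymSq R M →ₗ[R] SymCube R M where
  toFun := symMulAux R
  map_add' v w := by
    refine LinearMap.ext fun x => ?_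
    obtain ⟨y, rfl⟩ := Submodule.Quotient.mk_surjective _ x
    simp [symMulAux_mk, add_tmul, Submodule.Quotient.mk_add]
  map_smul' r v := by
    refine LinearMap.ext fun x => ?_
    obtain ⟨y, rfl⟩ := Submodule.Quotient.mk_surjective _ x
    simp only [symMulAux_mk, RingHom.id_apply, LinearMap.smul_apply]
    rw [← Submodule.Quotient.mk_smul, smul_tmul']

/-- The multiplication map `M ⊗ Sym² M → Sym³ M`. -/
noncomputable def symMul : M ⊗[R] SymSq R M →ₗ[R] SymCube R M :=
  TensorProduct.lift (symMulBil R)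

lemma symMul_tmul (v : M) (x : M ⊗[R] M) :
    symMul R (v ⊗ₜ[R] (Submodule.Quotient.mk x)) = Submodule.Quotient.mk (v ⊗ₜ[R] x) := rfl

/-- The Schur functor `L³₁`, the kernel of the multiplication `M ⊗ Sym² M → Sym³ M`. -/
noncomputable def SchurL31 : Submodule R (M ⊗[R] SymSq R M) := LinearMap.ker (symMul R)

variable {R}

/-- Functoriality of `Sym²`. -/
noncomputable def symSqMap (f : M →ₗ[R] N) : SymSq R M →ₗ[R] SymSq R N :=
  Submodule.mapQ _ _ (TensorProduct.map f f) (by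
    rw [sq2, Submodule.span_le]
    rintro x ⟨a, b, rfl⟩
    simp only [SetLike.mem_coe, Submodule.mem_comap, map_sub, TensorProduct.map_tmul]
    exact Submodule.subset_span ⟨f a, f b, rfl⟩)

/-- Functoriality of `Sym³`. -/
noncomputable def symCubeMap (f : M →ₗ[R] N) : SymCube R M →ₗ[R] SymCube R N :=
  Submodule.mapQ _ _ (TensorProduct.map f (TensorProduct.map f f)) (by
    rw [sq3, Submodule.span_le]
    rintro x (⟨a, b, c, rfl⟩ | ⟨a, b, c, rfl⟩) <;>
      simp only [SetLike.mem_coe, Submodule.mem_comap, map_sub, TensorProduct.map_tmul]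
    · exact Submodule.subset_span (Or.inl ⟨f a, f b, f c, rfl⟩)
    · exact Submodule.subset_span (Or.inr ⟨f a, f b, f c, rfl⟩))

end SymLib

section SymLib2
variable {R : Type*} [CommRing R]
variable {M N : Type*} [AddCommGroup M] [Module R M] [AddCommGroup N] [Module R N]

lemma symMul_natural (f : M →ₗ[R] N) :
    symCubeMap f ∘ₗ symMul R = symMul R ∘ₗ TensorProduct.map f (symSqMap f) := by
  apply TensorProduct.ext'
  intro v x
  obtain ⟨y, rfl⟩ := Submodule.Quotient.mk_surjective _ x
  simp only [LinearMap.comp_apply, TensorProduct.map_tmul]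
  rw [symMul_tmul]
  show Submodule.Quotient.mk ((TensorProduct.map f (TensorProduct.map f f)) (v ⊗ₜ[R] y)) = _
  rw [TensorProduct.map_tmul,
    show symSqMap f (Submodule.Quotient.mk y) = Submodule.Quotient.mk (TensorProduct.map f f y) from rfl,
    symMul_tmul]

/-- Functoriality of the Schur functor `L³₁`. -/
noncomputable def schurL31Map (f : M →ₗ[R] N) : SchurL31 (R := R) (M := M) →ₗ[R] SchurL31 (R := R) (M := N) :=
  LinearMap.restrict (TensorProduct.map f (symSqMap f)) (fun x hx => by
    have := congrFun (congrArg DFunLike.coe (symMul_natural f)) x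
    simp only [LinearMap.comp_apply] at this
    simp only [SchurL31, LinearMap.mem_ker] at hx ⊢
    rw [← this, hx, map_zero])

end SymLib2

section CrossEffect
variable {A : Type*} [CommRing A]
variable {M N : Type*} [AddCommGroup M] [Module A M] [AddCommGroup N] [Module A N]

/-- The map induced on `M ⊗ Sym² M` by an endomorphism `p` of `M`;
the Schur functor `L³₁` is a subfunctor of this construction. -/
noncomputable def ambMap (p : M →ₗ[A] M) :
    M ⊗[A] SymSq A M →ₗ[A] M ⊗[A] SymSq A M :=
  TensorProduct.map p (symSqMap p)

end CrossEffect

section Projections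
variable (A V W : Type*) [CommRing A] [AddCommGroup V] [Module A V]
  [AddCommGroup W] [Module A W]

/-- First projection-inclusion endomorphism of `V ⊕ W`. -/
noncomputable def prj1 : V × W →ₗ[A] V × W := (LinearMap.inl A V W) ∘ₗ (LinearMap.fst A V W)

/-- Second projection-inclusion endomorphism of `V ⊕ W`. -/
noncomputable def prj2 : V × W →ₗ[A] V × W := (LinearMap.inr A V W) ∘ₗ (LinearMap.snd A V W)

end Projections

/-- The second cross-effect of the Schur functor `L³₁`:
the image of `L³₁(V ⊕ W)` under the endomorphism `L³₁(p₁+p₂) - L³₁(p₁) - L³₁(p₂)`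
(the Eilenberg–Mac Lane cross-effect). -/
noncomputable def cr2SchurL31 (A V W : Type*) [CommRing A] [AddCommGroup V] [Module A V]
    [AddCommGroup W] [Module A W] :
    Submodule A ((V × W) ⊗[A] SymSq A (V × W)) :=
  Submodule.map (ambMap (prj1 A V W + prj2 A V W)
      - ambMap (prj1 A V W) - ambMap (prj2 A V W))
    (SchurL31 (R := A) (M := V × W))

/-! `(V ⊕ W) ⊗ Sym²(V ⊕ W)` is graded by bidegree, and `L³₁(p₁ + p₂) - L³₁(p₁) - L³₁(p₂)` is the
projection onto the mixed bidegrees `(2,1)` and `(1,2)`. In bidegree `(2,1)` an element has a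
`V ⊗ (V ⊗ W)` part and a `W ⊗ Sym² V` part, and lying in `L³₁` forces the second to be minus the
image of the first under `v ⊗ v' ⊗ w ↦ w ⊗ vv'`; symmetrically in bidegree `(1,2)`. Hence
`v ⊗ v' ⊗ w ↦ v ⊗ v'w - w ⊗ vv'` and `v ⊗ w ⊗ w' ↦ w ⊗ vw' - v ⊗ ww'` embed
`(V ⊗ V ⊗ W) ⊕ (V ⊗ W ⊗ W)` onto the cross-effect. Concretely, the projection equals this embedding
composed with a retraction, plus a map through `Sym³` built from the comultiplication
`Sym³ → M ⊗ Sym²`, which vanishes on `L³₁`. -/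

open LinearMap

section SymmetricPowers

variable {R M : Type*} [CommRing R] [AddCommGroup M] [Module R M]

lemma symSq_mk_tmul_comm (a b : M) :
    (Submodule.Quotient.mk (a ⊗ₜ[R] b) : SymSq R M) = Submodule.Quotient.mk (b ⊗ₜ[R] a) :=
  (Submodule.Quotient.eq _).2 (Submodule.subset_span ⟨a, b, rfl⟩)

lemma symCube_mk_tmul_swap₁₂ (a b c : M) :
    (Submodule.Quotient.mk (a ⊗ₜ[R] (b ⊗ₜ[R] c)) : SymCube R M) =
      Submodule.Quotient.mk (b ⊗ₜ[R] (a ⊗ₜ[R] c)) :=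
  (Submodule.Quotient.eq _).2 (Submodule.subset_span (Or.inl ⟨a, b, c, rfl⟩))

lemma symCube_mk_tmul_swap₂₃ (a b c : M) :
    (Submodule.Quotient.mk (a ⊗ₜ[R] (b ⊗ₜ[R] c)) : SymCube R M) =
      Submodule.Quotient.mk (a ⊗ₜ[R] (c ⊗ₜ[R] b)) :=
  (Submodule.Quotient.eq _).2 (Submodule.subset_span (Or.inr ⟨a, b, c, rfl⟩))

variable (R M) in
noncomputable def tensorSymSqMk : M ⊗[R] (M ⊗[R] M) →ₗ[R] M ⊗[R] SymSq R M :=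
  (sq2 R M).mkQ.lTensor M

@[simp]
lemma tensorSymSqMk_tmul (m : M) (y : M ⊗[R] M) :
    tensorSymSqMk R M (m ⊗ₜ y) = m ⊗ₜ Submodule.Quotient.mk y := rfl

lemma tensorSymSqMk_surjective : Function.Surjective (tensorSymSqMk R M) :=
  lTensor_surjective M (sq2 R M).mkQ_surjective

variable (R M) in
noncomputable def symCubeComul : SymCube R M →ₗ[R] M ⊗[R] SymSq R M :=
  (sq3 R M).liftQ
    (tensorSymSqMk R M ∘ₗ (LinearMap.id + (leftComm R M M M).toLinearMap +
      ((TensorProduct.assoc R M M M).symm.trans (TensorProduct.comm R (M ⊗[R] M) M)).toLinearMap))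
    <| by
    rw [sq3, Submodule.span_le]
    rintro x (⟨a, b, c, rfl⟩ | ⟨a, b, c, rfl⟩) <;>
      simp only [SetLike.mem_coe, mem_ker, map_sub, comp_apply, LinearMap.add_apply, id_apply,
        map_add, LinearEquiv.coe_coe, LinearEquiv.trans_apply, leftComm_tmul, assoc_symm_tmul,
        comm_tmul, tensorSymSqMk_tmul]
    · rw [symSq_mk_tmul_comm b a]; abel
    · rw [symSq_mk_tmul_comm c b]; abel

@[simp]
lemma symCubeComul_mk (a b c : M) :
    symCubeComul R M (Submodule.Quotient.mk (a ⊗ₜ[R] (b ⊗ₜ[R] c))) =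
      a ⊗ₜ Submodule.Quotient.mk (b ⊗ₜ c) + b ⊗ₜ Submodule.Quotient.mk (a ⊗ₜ c) +
        c ⊗ₜ Submodule.Quotient.mk (a ⊗ₜ b) := rfl

end SymmetricPowers

section CrossEffect

variable (A V W : Type*) [CommRing A] [AddCommGroup V] [Module A V] [AddCommGroup W] [Module A W]

noncomputable def symSqMixed : SymSq A (V × W) →ₗ[A] V ⊗[A] W :=
  (sq2 A (V × W)).liftQ (map (fst A V W) (snd A V W) +
      map (fst A V W) (snd A V W) ∘ₗ (TensorProduct.comm A (V × W) (V × W)).toLinearMap) (by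
    rw [sq2, Submodule.span_le]
    rintro x ⟨a, b, rfl⟩
    simp only [SetLike.mem_coe, mem_ker, map_sub, LinearMap.add_apply, comp_apply,
      LinearEquiv.coe_coe, comm_tmul, map_tmul]
    abel)

@[simp]
lemma symSqMixed_mk (a b : V × W) :
    symSqMixed A V W (Submodule.Quotient.mk (a ⊗ₜ b)) = a.1 ⊗ₜ b.2 + b.1 ⊗ₜ a.2 := rfl

noncomputable def cr2Incl₁ : V ⊗[A] (V ⊗[A] W) →ₗ[A] (V × W) ⊗[A] SymSq A (V × W) :=
  tensorSymSqMk A (V × W) ∘ₗ (map (inl A V W) (map (inl A V W) (inr A V W)) -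
    map (inr A V W) (map (inl A V W) (inl A V W)) ∘ₗ
      ((TensorProduct.assoc A V V W).symm.trans (TensorProduct.comm A (V ⊗[A] V) W)).toLinearMap)

@[simp]
lemma cr2Incl₁_tmul (v v' : V) (w : W) :
    cr2Incl₁ A V W (v ⊗ₜ (v' ⊗ₜ w)) =
      ((v, 0) : V × W) ⊗ₜ Submodule.Quotient.mk (((v', 0) : V × W) ⊗ₜ ((0, w) : V × W)) -
        ((0, w) : V × W) ⊗ₜ Submodule.Quotient.mk (((v, 0) : V × W) ⊗ₜ ((v', 0) : V × W)) := by
  simp [cr2Incl₁]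

noncomputable def cr2Incl₂ : V ⊗[A] (W ⊗[A] W) →ₗ[A] (V × W) ⊗[A] SymSq A (V × W) :=
  tensorSymSqMk A (V × W) ∘ₗ (map (inr A V W) (map (inl A V W) (inr A V W)) ∘ₗ
      (TensorProduct.leftComm A V W W).toLinearMap -
    map (inl A V W) (map (inr A V W) (inr A V W)))

@[simp]
lemma cr2Incl₂_tmul (v : V) (w w' : W) :
    cr2Incl₂ A V W (v ⊗ₜ (w ⊗ₜ w')) =
      ((0, w) : V × W) ⊗ₜ Submodule.Quotient.mk (((v, 0) : V × W) ⊗ₜ ((0, w') : V × W)) -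
        ((v, 0) : V × W) ⊗ₜ Submodule.Quotient.mk (((0, w) : V × W) ⊗ₜ ((0, w') : V × W)) := by
  simp [cr2Incl₂]

noncomputable def cr2Incl :
    (V ⊗[A] (V ⊗[A] W)) × (V ⊗[A] (W ⊗[A] W)) →ₗ[A] (V × W) ⊗[A] SymSq A (V × W) :=
  coprod (cr2Incl₁ A V W) (cr2Incl₂ A V W)

noncomputable def cr2Proj :
    (V × W) ⊗[A] SymSq A (V × W) →ₗ[A] (V ⊗[A] (V ⊗[A] W)) × (V ⊗[A] (W ⊗[A] W)) :=
  prod (map (fst A V W) (symSqMixed A V W))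
    ((TensorProduct.leftComm A W V W).toLinearMap ∘ₗ map (snd A V W) (symSqMixed A V W))

lemma cr2Proj_comp_cr2Incl : cr2Proj A V W ∘ₗ cr2Incl A V W = LinearMap.id := by
  ext <;> simp [cr2Proj, cr2Incl]

lemma symMul_comp_cr2Incl : symMul A ∘ₗ cr2Incl A V W = 0 := by
  refine prod_ext (ext_threefold' fun v v' w => ?_) (ext_threefold' fun v w w' => ?_)
  · simp only [cr2Incl, comp_apply, coprod_apply, inl_apply, map_zero, add_zero,
      cr2Incl₁_tmul, map_sub, symMul_tmul, LinearMap.zero_apply, sub_eq_zero]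
    rw [symCube_mk_tmul_swap₂₃, symCube_mk_tmul_swap₁₂]
  · simp only [cr2Incl, comp_apply, coprod_apply, inr_apply, map_zero, zero_add,
      cr2Incl₂_tmul, map_sub, symMul_tmul, LinearMap.zero_apply, sub_eq_zero]
    rw [symCube_mk_tmul_swap₁₂]

noncomputable def ambCr2 : (V × W) ⊗[A] SymSq A (V × W) →ₗ[A] (V × W) ⊗[A] SymSq A (V × W) :=
  ambMap (prj1 A V W + prj2 A V W) - ambMap (prj1 A V W) - ambMap (prj2 A V W)

lemma ambCr2_eq :
    ambCr2 A V W = cr2Incl A V W ∘ₗ cr2Proj A V W +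
      (map (prj2 A V W) (symSqMap (prj1 A V W)) + map (prj1 A V W) (symSqMap (prj2 A V W))) ∘ₗ
        symCubeComul A (V × W) ∘ₗ symMul A := by
  rw [← cancel_right tensorSymSqMk_surjective]
  refine ext_threefold' fun ⟨v₁, w₁⟩ ⟨v₂, w₂⟩ ⟨v₃, w₃⟩ => ?_
  have split (v : V) (w : W) : ((v, w) : V × W) = (v, 0) + (0, w) := by simp
  simp only [ambCr2, ambMap, prj1, prj2, symSqMap, coe_comp, Function.comp_apply,
    tensorSymSqMk_tmul, LinearMap.sub_apply, map_tmul, LinearMap.add_apply, coe_inl, coe_fst,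
    coe_inr, coe_snd, Prod.mk_add_mk, add_zero, zero_add, Submodule.mapQ_apply, cr2Incl, cr2Proj,
    coprod_comp_prod, fst_apply, symSqMixed_mk, tmul_add, map_add, cr2Incl₁_tmul,
    LinearEquiv.coe_coe, snd_apply, leftComm_tmul, cr2Incl₂_tmul, symMul_tmul, symCubeComul_mk]
  rw [split v₁ w₁, split v₂ w₂, split v₃ w₃]
  simp only [tmul_add, add_tmul, Submodule.Quotient.mk_add]
  rw [symSq_mk_tmul_comm ((0, w₂) : V × W) ((v₃, 0) : V × W)]
  abel

lemma ambCr2_apply_of_symMul_eq_zero {x : (V × W) ⊗[A] SymSq A (V × W)} (hx : symMul A x = 0) :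
    ambCr2 A V W x = cr2Incl A V W (cr2Proj A V W x) := by
  simp [ambCr2_eq, hx]

lemma cr2SchurL31_eq_range : cr2SchurL31 A V W = range (cr2Incl A V W) := by
  change (ker (symMul A)).map (ambCr2 A V W) = _
  apply le_antisymm
  · rintro _ ⟨x, hx, rfl⟩
    exact ⟨cr2Proj A V W x, (ambCr2_apply_of_symMul_eq_zero A V W hx).symm⟩
  · rintro _ ⟨t, rfl⟩
    have ht : symMul A (cr2Incl A V W t) = 0 := congr($(symMul_comp_cr2Incl A V W) t)
    refine ⟨cr2Incl A V W t, ht, ?_⟩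
    rw [ambCr2_apply_of_symMul_eq_zero A V W ht, ← comp_apply (cr2Proj A V W), cr2Proj_comp_cr2Incl,
      id_apply]

end CrossEffect

theorem cr2_schurL31_iso_general (A V W : Type*) [CommRing A]
    [AddCommGroup V] [Module A V]
    [AddCommGroup W] [Module A W] :
    Nonempty ((cr2SchurL31 A V W) ≃ₗ[A]
      (V ⊗[A] (V ⊗[A] W)) × (V ⊗[A] (W ⊗[A] W))) := by
  have h_inj : Function.Injective (cr2Incl A V W) :=
    (cr2Incl A V W).injective_of_comp_eq_id _ (cr2Proj_comp_cr2Incl A V W)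
  exact ⟨(LinearEquiv.ofEq _ _ (cr2SchurL31_eq_range A V W)).trans
    (LinearEquiv.ofInjective _ h_inj).symm⟩

/-- for finitely generated projective modules `V`, `W` over a commutative
ring `A`, the second cross-effect of the Schur functor `L³₁` (where
`L³₁(V) = ker (V ⊗ Sym² V → Sym³ V)`) satisfies
`cr₂(L³₁)(V, W) ≅ (V ⊗ V ⊗ W) ⊕ (V ⊗ W ⊗ W)`. -/
theorem cr2_schurL31_iso (A V W : Type*) [CommRing A]
    [AddCommGroup V] [Module A V] [Module.Finite A V] [Module.Projective A V]
    [AddCommGroup W] [Module A W] [Module.Finite A W] [Module.Projective A W] :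
    Nonempty ((cr2SchurL31 A V W) ≃ₗ[A]
      (V ⊗[A] (V ⊗[A] W)) × (V ⊗[A] (W ⊗[A] W))) :=
  cr2_schurL31_iso_general A V W
end

section
/- Let F be a functor from an additive category P to an abelian category M with F(0) = 0. For objects V₁, V₂, V₂' of P there is a natural isomorphism cr_2(F)(V₁, V₂ ⊕ V₂') ≅ cr_2(F)(V₁,V₂) ⊕ cr_2(F)(V₁,V₂') ⊕ cr_3(F)(V₁,V₂,V₂'). -/
open CategoryTheory CategoryTheory.Limits

universe v v' u u'

section CrossEffects
variable {P : Type u} [Category.{v} P] [Preadditive P] [HasZeroObject P]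
  [HasBinaryBiproducts P]
variable {M : Type u'} [Category.{v'} M] [Abelian M]
variable (F : P ⥤ M)

/-- The Eilenberg–Mac Lane second-cross-effect endomorphism
`F(p₁ + p₂) - F(p₁) - F(p₂)` of `F(V₁ ⊕ V₂)`; its image is `cr₂(F)(V₁, V₂)`. -/
noncomputable def cr2End (V₁ V₂ : P) : F.obj (V₁ ⊞ V₂) ⟶ F.obj (V₁ ⊞ V₂) :=
  F.map (biprod.fst ≫ biprod.inl + biprod.snd ≫ biprod.inr)
    - F.map (biprod.fst ≫ biprod.inl) - F.map (biprod.snd ≫ biprod.inr)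

/-- The Eilenberg–Mac Lane third-cross-effect endomorphism
`Σ_{∅ ≠ S ⊆ {1,2,3}} (-1)^{3-|S|} F(Σ_{i ∈ S} pᵢ)` of `F(V₁ ⊕ (V₂ ⊕ V₃))`;
its image is `cr₃(F)(V₁, V₂, V₃)`. -/
noncomputable def cr3End (V₁ V₂ V₃ : P) :
    F.obj (V₁ ⊞ (V₂ ⊞ V₃)) ⟶ F.obj (V₁ ⊞ (V₂ ⊞ V₃)) :=
  let p1 : V₁ ⊞ (V₂ ⊞ V₃) ⟶ V₁ ⊞ (V₂ ⊞ V₃) := biprod.fst ≫ biprod.inl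
  let p2 : V₁ ⊞ (V₂ ⊞ V₃) ⟶ V₁ ⊞ (V₂ ⊞ V₃) :=
    biprod.snd ≫ biprod.fst ≫ biprod.inl ≫ biprod.inr
  let p3 : V₁ ⊞ (V₂ ⊞ V₃) ⟶ V₁ ⊞ (V₂ ⊞ V₃) :=
    biprod.snd ≫ biprod.snd ≫ biprod.inr ≫ biprod.inr
  F.map (p1 + p2 + p3) - F.map (p1 + p2) - F.map (p1 + p3) - F.map (p2 + p3)
    + F.map p1 + F.map p2 + F.map p3

end CrossEffects
set_option linter.unusedSectionVars false
set_option maxHeartbeats 1000000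


namespace CrossEffAux
open ZeroObject

variable {P : Type u} [Category.{v} P] [Preadditive P] [HasZeroObject P]
  [HasBinaryBiproducts P]
variable {M : Type u'} [Category.{v'} M] [Abelian M]
variable (F : P ⥤ M)

lemma map_zero (hF : ∀ X : P, IsZero X → IsZero (F.obj X)) (X Y : P) :
    F.map (0 : X ⟶ Y) = 0 := by
  have hz : IsZero (F.obj (0 : P)) := hF _ (isZero_zero P)
  have h : (0 : X ⟶ Y) = (0 : X ⟶ (0 : P)) ≫ (0 : (0 : P) ⟶ Y) := by simp
  rw [h, F.map_comp, hz.eq_of_src (F.map (0 : (0 : P) ⟶ Y)) 0, comp_zero]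

variable (V₁ V₂ V₃ : P)

lemma cr3End_eq : cr3End F V₁ V₂ V₃ =
    F.map ((biprod.fst ≫ biprod.inl
        + biprod.snd ≫ biprod.fst ≫ biprod.inl ≫ biprod.inr)
        + biprod.snd ≫ biprod.snd ≫ biprod.inr ≫ biprod.inr)
      - F.map (biprod.fst ≫ biprod.inl
        + biprod.snd ≫ biprod.fst ≫ biprod.inl ≫ biprod.inr)
      - F.map (biprod.fst ≫ biprod.inl
        + biprod.snd ≫ biprod.snd ≫ biprod.inr ≫ biprod.inr)
      - F.map (biprod.snd ≫ biprod.fst ≫ biprod.inl ≫ biprod.inr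
        + biprod.snd ≫ biprod.snd ≫ biprod.inr ≫ biprod.inr)
      + F.map (biprod.fst ≫ biprod.inl)
      + F.map (biprod.snd ≫ biprod.fst ≫ biprod.inl ≫ biprod.inr)
      + F.map (biprod.snd ≫ biprod.snd ≫ biprod.inr ≫ biprod.inr) := rfl

lemma sum123 : ((biprod.fst ≫ biprod.inl
      + biprod.snd ≫ biprod.fst ≫ biprod.inl ≫ biprod.inr)
      + biprod.snd ≫ biprod.snd ≫ biprod.inr ≫ biprod.inr :
      V₁ ⊞ (V₂ ⊞ V₃) ⟶ V₁ ⊞ (V₂ ⊞ V₃)) = 𝟙 _ := by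
  ext <;> simp

lemma sum23 : (biprod.snd ≫ biprod.fst ≫ biprod.inl ≫ biprod.inr
      + biprod.snd ≫ biprod.snd ≫ biprod.inr ≫ biprod.inr :
      V₁ ⊞ (V₂ ⊞ V₃) ⟶ V₁ ⊞ (V₂ ⊞ V₃)) = biprod.snd ≫ biprod.inr := by
  ext <;> simp

lemma cr2_idem (hF : ∀ X : P, IsZero X → IsZero (F.obj X)) (A B : P) :
    cr2End F A B ≫ cr2End F A B = cr2End F A B := by
  have h0 := map_zero F hF
  simp only [cr2End, biprod.total, F.map_id]
  simp only [Preadditive.sub_comp, Preadditive.comp_sub, Category.id_comp,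
    Category.comp_id, ← F.map_comp]
  simp [h0]
  all_goals abel

variable (hF : ∀ X : P, IsZero X → IsZero (F.obj X))

section
include hF

lemma KA :
    F.map (biprod.map (𝟙 V₁) biprod.fst) ≫ cr2End F V₁ V₂ ≫
        F.map (biprod.map (𝟙 V₁) biprod.inl)
      + F.map (biprod.map (𝟙 V₁) biprod.snd) ≫ cr2End F V₁ V₃ ≫
        F.map (biprod.map (𝟙 V₁) biprod.inr)
      + cr3End F V₁ V₂ V₃ = cr2End F V₁ (V₂ ⊞ V₃) := by
  have h0 := map_zero F hF
  simp only [cr2End, cr3End_eq, sum123, sum23, biprod.total, F.map_id]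
  simp only [biprod.map_eq, Preadditive.sub_comp, Preadditive.comp_sub,
    Preadditive.add_comp, Preadditive.comp_add, Category.assoc, Category.id_comp,
    Category.comp_id, ← F.map_comp]
  simp [h0, sum23]
  all_goals abel

lemma KB1 : F.map (biprod.map (𝟙 V₁) biprod.inl) ≫ cr2End F V₁ (V₂ ⊞ V₃) ≫
    F.map (biprod.map (𝟙 V₁) biprod.fst) = cr2End F V₁ V₂ := by
  have h0 := map_zero F hF
  simp only [cr2End, cr3End_eq, sum123, sum23, biprod.total, F.map_id]
  simp only [biprod.map_eq, Preadditive.sub_comp, Preadditive.comp_sub,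
    Preadditive.add_comp, Preadditive.comp_add, Category.assoc, Category.id_comp,
    Category.comp_id, ← F.map_comp]
  simp [h0, sum23]
  all_goals abel

lemma KB2 : F.map (biprod.map (𝟙 V₁) biprod.inr) ≫ cr2End F V₁ (V₂ ⊞ V₃) ≫
    F.map (biprod.map (𝟙 V₁) biprod.snd) = cr2End F V₁ V₃ := by
  have h0 := map_zero F hF
  simp only [cr2End, cr3End_eq, sum123, sum23, biprod.total, F.map_id]
  simp only [biprod.map_eq, Preadditive.sub_comp, Preadditive.comp_sub,
    Preadditive.add_comp, Preadditive.comp_add, Category.assoc, Category.id_comp,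
    Category.comp_id, ← F.map_comp]
  simp [h0, sum23]
  all_goals abel

lemma KC1 : F.map (biprod.map (𝟙 V₁) biprod.inl) ≫ cr2End F V₁ (V₂ ⊞ V₃) ≫
    F.map (biprod.map (𝟙 V₁) biprod.snd) = 0 := by
  have h0 := map_zero F hF
  simp only [cr2End, cr3End_eq, sum123, sum23, biprod.total, F.map_id]
  simp only [biprod.map_eq, Preadditive.sub_comp, Preadditive.comp_sub,
    Preadditive.add_comp, Preadditive.comp_add, Category.assoc, Category.id_comp,
    Category.comp_id, ← F.map_comp]
  simp [h0, sum23]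
  all_goals abel

lemma KC2 : F.map (biprod.map (𝟙 V₁) biprod.inr) ≫ cr2End F V₁ (V₂ ⊞ V₃) ≫
    F.map (biprod.map (𝟙 V₁) biprod.fst) = 0 := by
  have h0 := map_zero F hF
  simp only [cr2End, cr3End_eq, sum123, sum23, biprod.total, F.map_id]
  simp only [biprod.map_eq, Preadditive.sub_comp, Preadditive.comp_sub,
    Preadditive.add_comp, Preadditive.comp_add, Category.assoc, Category.id_comp,
    Category.comp_id, ← F.map_comp]
  simp [h0, sum23]
  all_goals abel

lemma KH1 : F.map (biprod.map (𝟙 V₁) biprod.inl) ≫ cr2End F V₁ (V₂ ⊞ V₃) ≫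
    cr3End F V₁ V₂ V₃ = 0 := by
  have h0 := map_zero F hF
  simp only [cr2End, cr3End_eq, sum123, sum23, biprod.total, F.map_id]
  simp only [biprod.map_eq, Preadditive.sub_comp, Preadditive.comp_sub,
    Preadditive.add_comp, Preadditive.comp_add, Category.assoc, Category.id_comp,
    Category.comp_id, ← F.map_comp]
  simp [h0, sum23]
  all_goals abel

lemma KH2 : F.map (biprod.map (𝟙 V₁) biprod.inr) ≫ cr2End F V₁ (V₂ ⊞ V₃) ≫
    cr3End F V₁ V₂ V₃ = 0 := by
  have h0 := map_zero F hF
  simp only [cr2End, cr3End_eq, sum123, sum23, biprod.total, F.map_id]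
  simp only [biprod.map_eq, Preadditive.sub_comp, Preadditive.comp_sub,
    Preadditive.add_comp, Preadditive.comp_add, Category.assoc, Category.id_comp,
    Category.comp_id, ← F.map_comp]
  simp [h0, sum23]
  all_goals abel

lemma KE : cr3End F V₁ V₂ V₃ ≫ cr2End F V₁ (V₂ ⊞ V₃) = cr3End F V₁ V₂ V₃ := by
  have h0 := map_zero F hF
  simp only [cr2End, cr3End_eq, sum123, sum23, biprod.total, F.map_id]
  simp only [biprod.map_eq, Preadditive.sub_comp, Preadditive.comp_sub,
    Preadditive.add_comp, Preadditive.comp_add, Category.assoc, Category.id_comp,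
    Category.comp_id, ← F.map_comp]
  simp [h0, sum23]
  all_goals abel

lemma KG : cr3End F V₁ V₂ V₃ ≫ cr3End F V₁ V₂ V₃ = cr3End F V₁ V₂ V₃ := by
  have h0 := map_zero F hF
  simp only [cr2End, cr3End_eq, sum123, sum23, biprod.total, F.map_id]
  simp only [biprod.map_eq, Preadditive.sub_comp, Preadditive.comp_sub,
    Preadditive.add_comp, Preadditive.comp_add, Category.assoc, Category.id_comp,
    Category.comp_id, ← F.map_comp]
  simp [h0, sum23]
  all_goals abel

lemma KF1 : cr3End F V₁ V₂ V₃ ≫ F.map (biprod.map (𝟙 V₁) biprod.fst) ≫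
    cr2End F V₁ V₂ = 0 := by
  have h0 := map_zero F hF
  simp only [cr2End, cr3End_eq, sum123, sum23, biprod.total, F.map_id]
  simp only [biprod.map_eq, Preadditive.sub_comp, Preadditive.comp_sub,
    Preadditive.add_comp, Preadditive.comp_add, Category.assoc, Category.id_comp,
    Category.comp_id, ← F.map_comp]
  simp [h0, sum23]
  all_goals abel

lemma KF2 : cr3End F V₁ V₂ V₃ ≫ F.map (biprod.map (𝟙 V₁) biprod.snd) ≫
    cr2End F V₁ V₃ = 0 := by
  have h0 := map_zero F hF
  simp only [cr2End, cr3End_eq, sum123, sum23, biprod.total, F.map_id]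
  simp only [biprod.map_eq, Preadditive.sub_comp, Preadditive.comp_sub,
    Preadditive.add_comp, Preadditive.comp_add, Category.assoc, Category.id_comp,
    Category.comp_id, ← F.map_comp]
  simp [h0, sum23]
  all_goals abel


end

section ImageLemmas
variable {C : Type u'} [Category.{v'} C] [Abelian C] {X Y : C}

lemma iota_comp_self {f g : X ⟶ X} (h : f ≫ g = f) :
    image.ι f ≫ g = image.ι f := by
  rw [← cancel_epi (factorThruImage f), ← Category.assoc, image.fac, h]

lemma iota_comp_zero {f : X ⟶ X} {g : X ⟶ Y} (h : f ≫ g = 0) :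
    image.ι f ≫ g = 0 := by
  rw [← cancel_epi (factorThruImage f), ← Category.assoc, image.fac, h, comp_zero]

lemma iota_pi_id {f : X ⟶ X} (h : f ≫ f = f) :
    image.ι f ≫ factorThruImage f = 𝟙 _ := by
  rw [← cancel_mono (image.ι f), Category.assoc, image.fac, iota_comp_self h,
    Category.id_comp]

lemma comp_pi_zero {x : Y ⟶ X} {g : X ⟶ X} (h : x ≫ g = 0) :
    x ≫ factorThruImage g = 0 := by
  rw [← cancel_mono (image.ι g), Category.assoc, image.fac, h, zero_comp]

lemma helper_id {c : Y ⟶ Y} {u : Y ⟶ X} {v : X ⟶ X} {w : X ⟶ Y}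
    (h : u ≫ v ≫ w = c) (hc : c ≫ c = c) :
    image.ι c ≫ u ≫ v ≫ w ≫ factorThruImage c = 𝟙 (image c) := by
  have h2 : image.ι c ≫ u ≫ v ≫ w ≫ factorThruImage c
      = image.ι c ≫ (u ≫ v ≫ w) ≫ factorThruImage c := by
    simp only [Category.assoc]
  rw [h2, h, ← Category.assoc, iota_comp_self hc, iota_pi_id hc]

lemma helper_zero {Z : C} {c : Y ⟶ Y} {c' : Z ⟶ Z} {u : Y ⟶ X} {v : X ⟶ X} {w : X ⟶ Z}
    (h : u ≫ v ≫ w = 0) :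
    image.ι c ≫ u ≫ v ≫ w ≫ factorThruImage c' = 0 := by
  have h2 : image.ι c ≫ u ≫ v ≫ w ≫ factorThruImage c'
      = image.ι c ≫ (u ≫ v ≫ w) ≫ factorThruImage c' := by
    simp only [Category.assoc]
  rw [h2, h, zero_comp, comp_zero]

lemma helper_pz {c : Y ⟶ Y} {u : Y ⟶ X} {v : X ⟶ X} {g : X ⟶ X}
    (h : u ≫ v ≫ g = 0) :
    image.ι c ≫ u ≫ v ≫ factorThruImage g = 0 := by
  have h2 : (image.ι c ≫ u ≫ v) ≫ g = 0 := by
    simp only [Category.assoc, h, comp_zero]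
  simpa [Category.assoc] using comp_pi_zero h2

end ImageLemmas

section Iso

noncomputable def theHom :
    image (cr2End F V₁ (V₂ ⊞ V₃)) ⟶
      image (cr2End F V₁ V₂) ⊞ (image (cr2End F V₁ V₃) ⊞ image (cr3End F V₁ V₂ V₃)) :=
  biprod.lift
    (image.ι _ ≫ F.map (biprod.map (𝟙 V₁) biprod.fst) ≫
      factorThruImage (cr2End F V₁ V₂))
    (biprod.lift
      (image.ι _ ≫ F.map (biprod.map (𝟙 V₁) biprod.snd) ≫
        factorThruImage (cr2End F V₁ V₃))
      (image.ι _ ≫ factorThruImage (cr3End F V₁ V₂ V₃)))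

noncomputable def theInv :
    (image (cr2End F V₁ V₂) ⊞ (image (cr2End F V₁ V₃) ⊞ image (cr3End F V₁ V₂ V₃))) ⟶
      image (cr2End F V₁ (V₂ ⊞ V₃)) :=
  biprod.desc
    (image.ι _ ≫ F.map (biprod.map (𝟙 V₁) biprod.inl) ≫
      factorThruImage (cr2End F V₁ (V₂ ⊞ V₃)))
    (biprod.desc
      (image.ι _ ≫ F.map (biprod.map (𝟙 V₁) biprod.inr) ≫
        factorThruImage (cr2End F V₁ (V₂ ⊞ V₃)))
      (image.ι _ ≫ factorThruImage (cr2End F V₁ (V₂ ⊞ V₃))))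

include hF

lemma hom_inv : theHom F V₁ V₂ V₃ ≫ theInv F V₁ V₂ V₃ = 𝟙 _ := by
  have h1 : theHom F V₁ V₂ V₃ ≫ theInv F V₁ V₂ V₃
      = image.ι (cr2End F V₁ (V₂ ⊞ V₃)) ≫
          (F.map (biprod.map (𝟙 V₁) biprod.fst) ≫ cr2End F V₁ V₂ ≫
              F.map (biprod.map (𝟙 V₁) biprod.inl)
            + F.map (biprod.map (𝟙 V₁) biprod.snd) ≫ cr2End F V₁ V₃ ≫
              F.map (biprod.map (𝟙 V₁) biprod.inr)
            + cr3End F V₁ V₂ V₃) ≫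
          factorThruImage (cr2End F V₁ (V₂ ⊞ V₃)) := by
    simp [theHom, theInv, Preadditive.comp_add, Preadditive.add_comp, Category.assoc]
    abel
  rw [h1, KA F V₁ V₂ V₃ hF, ← Category.assoc,
    iota_comp_self (cr2_idem F hF V₁ (V₂ ⊞ V₃)),
    iota_pi_id (cr2_idem F hF V₁ (V₂ ⊞ V₃))]

lemma inv_hom : theInv F V₁ V₂ V₃ ≫ theHom F V₁ V₂ V₃ = 𝟙 _ := by
  apply biprod.hom_ext'
  · apply biprod.hom_ext
    · simp only [theInv, theHom, biprod.inl_desc_assoc, Category.assoc,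
        biprod.lift_fst, image.fac_assoc, Category.comp_id, Category.id_comp]
      simp [theInv, theHom]
      exact helper_id (KB1 F V₁ V₂ V₃ hF) (cr2_idem F hF V₁ V₂)
    · apply biprod.hom_ext
      · simp [theInv, theHom]
        exact helper_zero (KC1 F V₁ V₂ V₃ hF)
      · simp [theInv, theHom]
        exact helper_pz (KH1 F V₁ V₂ V₃ hF)
  · apply biprod.hom_ext'
    · apply biprod.hom_ext
      · simp [theInv, theHom]
        exact helper_zero (KC2 F V₁ V₂ V₃ hF)
      · apply biprod.hom_ext
        · simp [theInv, theHom]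
          exact helper_id (KB2 F V₁ V₂ V₃ hF) (cr2_idem F hF V₁ V₃)
        · simp [theInv, theHom]
          exact helper_pz (KH2 F V₁ V₂ V₃ hF)
    · apply biprod.hom_ext
      · simp [theInv, theHom]
        rw [← Category.assoc, iota_comp_self (KE F V₁ V₂ V₃ hF), ← Category.assoc]
        exact comp_pi_zero (by rw [Category.assoc]; exact iota_comp_zero (KF1 F V₁ V₂ V₃ hF))
      · apply biprod.hom_ext
        · simp [theInv, theHom]
          rw [← Category.assoc, iota_comp_self (KE F V₁ V₂ V₃ hF), ← Category.assoc]
          exact comp_pi_zero (by rw [Category.assoc]; exact iota_comp_zero (KF2 F V₁ V₂ V₃ hF))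
        · simp [theInv, theHom]
          rw [← Category.assoc, iota_comp_self (KE F V₁ V₂ V₃ hF),
            iota_pi_id (KG F V₁ V₂ V₃ hF)]

end Iso
end CrossEffAux

open CrossEffAux


/-- let `F : P ⥤ M` be a functor from an additive category to an abelian
category with `F(0) = 0`.  For objects `V₁, V₂, V₂'` of `P` there is a natural
isomorphism `cr₂(F)(V₁, V₂ ⊕ V₂') ≅ cr₂(F)(V₁,V₂) ⊕ cr₂(F)(V₁,V₂') ⊕ cr₃(F)(V₁,V₂,V₂')`,
where the cross-effects are the images of the Eilenberg–Mac Lane endomorphisms above.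
Naturality is expressed by compatibility with the maps induced on images by arbitrary
morphisms `f₁, f₂, f₂'` (via any commuting squares witnessing that the cross-effect
endomorphisms are natural). -/
theorem cr2_biprod_decomposition {P : Type u} [Category.{v} P] [Preadditive P]
    [HasZeroObject P] [HasBinaryBiproducts P]
    {M : Type u'} [Category.{v'} M] [Abelian M]
    (F : P ⥤ M) (hF : ∀ X : P, IsZero X → IsZero (F.obj X)) :
    ∃ e : ∀ V₁ V₂ V₂' : P,
      (image (cr2End F V₁ (V₂ ⊞ V₂')) ≅
        image (cr2End F V₁ V₂) ⊞ (image (cr2End F V₁ V₂') ⊞ image (cr3End F V₁ V₂ V₂'))),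
      ∀ (V₁ V₂ V₂' W₁ W₂ W₂' : P) (f₁ : V₁ ⟶ W₁) (f₂ : V₂ ⟶ W₂) (f₂' : V₂' ⟶ W₂')
        (w : F.map (biprod.map f₁ (biprod.map f₂ f₂')) ≫ cr2End F W₁ (W₂ ⊞ W₂')
          = cr2End F V₁ (V₂ ⊞ V₂') ≫ F.map (biprod.map f₁ (biprod.map f₂ f₂')))
        (w₁ : F.map (biprod.map f₁ f₂) ≫ cr2End F W₁ W₂
          = cr2End F V₁ V₂ ≫ F.map (biprod.map f₁ f₂))
        (w₂ : F.map (biprod.map f₁ f₂') ≫ cr2End F W₁ W₂'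
          = cr2End F V₁ V₂' ≫ F.map (biprod.map f₁ f₂'))
        (w₃ : F.map (biprod.map f₁ (biprod.map f₂ f₂')) ≫ cr3End F W₁ W₂ W₂'
          = cr3End F V₁ V₂ V₂' ≫ F.map (biprod.map f₁ (biprod.map f₂ f₂'))),
        image.map (f := Arrow.mk (cr2End F V₁ (V₂ ⊞ V₂')))
            (g := Arrow.mk (cr2End F W₁ (W₂ ⊞ W₂')))
            (Arrow.homMk (u := F.map (biprod.map f₁ (biprod.map f₂ f₂')))
              (v := F.map (biprod.map f₁ (biprod.map f₂ f₂'))) w) ≫ (e W₁ W₂ W₂').hom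
          = (e V₁ V₂ V₂').hom ≫ biprod.map
              (image.map (f := Arrow.mk (cr2End F V₁ V₂)) (g := Arrow.mk (cr2End F W₁ W₂))
                (Arrow.homMk (u := F.map (biprod.map f₁ f₂))
                  (v := F.map (biprod.map f₁ f₂)) w₁))
              (biprod.map
                (image.map (f := Arrow.mk (cr2End F V₁ V₂'))
                  (g := Arrow.mk (cr2End F W₁ W₂'))
                  (Arrow.homMk (u := F.map (biprod.map f₁ f₂'))
                    (v := F.map (biprod.map f₁ f₂')) w₂))
                (image.map (f := Arrow.mk (cr3End F V₁ V₂ V₂'))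
                  (g := Arrow.mk (cr3End F W₁ W₂ W₂'))
                  (Arrow.homMk (u := F.map (biprod.map f₁ (biprod.map f₂ f₂')))
                    (v := F.map (biprod.map f₁ (biprod.map f₂ f₂'))) w₃))) := by
  refine ⟨fun V₁ V₂ V₂' =>
    ⟨theHom F V₁ V₂ V₂', theInv F V₁ V₂ V₂',
      hom_inv F V₁ V₂ V₂' hF, inv_hom F V₁ V₂ V₂' hF⟩, ?_⟩
  intro V₁ V₂ V₂' W₁ W₂ W₂' f₁ f₂ f₂' w w₁ w₂ w₃
  have key1 : F.map (biprod.map f₁ (biprod.map f₂ f₂')) ≫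
        F.map (biprod.map (𝟙 W₁) biprod.fst)
      = F.map (biprod.map (𝟙 V₁) biprod.fst) ≫ F.map (biprod.map f₁ f₂) := by
    rw [← F.map_comp, ← F.map_comp]; congr 1; ext <;> simp
  have key2 : F.map (biprod.map f₁ (biprod.map f₂ f₂')) ≫
        F.map (biprod.map (𝟙 W₁) biprod.snd)
      = F.map (biprod.map (𝟙 V₁) biprod.snd) ≫ F.map (biprod.map f₁ f₂') := by
    rw [← F.map_comp, ← F.map_comp]; congr 1; ext <;> simp
  have mapι : image.map (f := Arrow.mk (cr2End F V₁ (V₂ ⊞ V₂')))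
        (g := Arrow.mk (cr2End F W₁ (W₂ ⊞ W₂'))) (Arrow.homMk (u := F.map (biprod.map f₁ (biprod.map f₂ f₂')))
        (v := F.map (biprod.map f₁ (biprod.map f₂ f₂'))) w) ≫
        image.ι (cr2End F W₁ (W₂ ⊞ W₂'))
      = image.ι (cr2End F V₁ (V₂ ⊞ V₂')) ≫ F.map (biprod.map f₁ (biprod.map f₂ f₂')) :=
    image.map_ι _
  have fm₁ : factorThruImage (cr2End F V₁ V₂) ≫
        image.map (f := Arrow.mk (cr2End F V₁ V₂)) (g := Arrow.mk (cr2End F W₁ W₂))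
          (Arrow.homMk (u := F.map (biprod.map f₁ f₂))
          (v := F.map (biprod.map f₁ f₂)) w₁)
      = F.map (biprod.map f₁ f₂) ≫ factorThruImage (cr2End F W₁ W₂) :=
    image.factor_map (f := Arrow.mk (cr2End F V₁ V₂)) (g := Arrow.mk (cr2End F W₁ W₂))
      (Arrow.homMk (u := F.map (biprod.map f₁ f₂)) (v := F.map (biprod.map f₁ f₂)) w₁)
  have fm₂ : factorThruImage (cr2End F V₁ V₂') ≫
        image.map (f := Arrow.mk (cr2End F V₁ V₂')) (g := Arrow.mk (cr2End F W₁ W₂'))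
          (Arrow.homMk (u := F.map (biprod.map f₁ f₂'))
          (v := F.map (biprod.map f₁ f₂')) w₂)
      = F.map (biprod.map f₁ f₂') ≫ factorThruImage (cr2End F W₁ W₂') :=
    image.factor_map (f := Arrow.mk (cr2End F V₁ V₂')) (g := Arrow.mk (cr2End F W₁ W₂'))
      (Arrow.homMk (u := F.map (biprod.map f₁ f₂')) (v := F.map (biprod.map f₁ f₂')) w₂)
  have fm₃ : factorThruImage (cr3End F V₁ V₂ V₂') ≫
        image.map (f := Arrow.mk (cr3End F V₁ V₂ V₂'))
          (g := Arrow.mk (cr3End F W₁ W₂ W₂'))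
          (Arrow.homMk (u := F.map (biprod.map f₁ (biprod.map f₂ f₂')))
          (v := F.map (biprod.map f₁ (biprod.map f₂ f₂'))) w₃)
      = F.map (biprod.map f₁ (biprod.map f₂ f₂')) ≫
          factorThruImage (cr3End F W₁ W₂ W₂') :=
    image.factor_map (f := Arrow.mk (cr3End F V₁ V₂ V₂'))
      (g := Arrow.mk (cr3End F W₁ W₂ W₂'))
      (Arrow.homMk (u := F.map (biprod.map f₁ (biprod.map f₂ f₂')))
        (v := F.map (biprod.map f₁ (biprod.map f₂ f₂'))) w₃)
  apply biprod.hom_ext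
  · simp [theHom]
    rw [← Category.assoc, mapι, fm₁]
    simp only [Category.assoc]
    rw [reassoc_of% key1]
  · apply biprod.hom_ext
    · simp [theHom]
      rw [← Category.assoc, mapι, fm₂]
      simp only [Category.assoc]
      rw [reassoc_of% key2]
    · simp [theHom]
      rw [← Category.assoc, mapι, fm₃]
      simp only [Category.assoc]
end
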